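/- Let a > 0, c ≠ 0, σ ≤ μ, σ < −μ, μ ≠ 0, and δ ∈ (0, |a/c|). If P(δ,c,2) < δ, then P(δ,c,2) = I1(−δμ/σ, δ) when r D1 − 1 ≤ −μ/σ, and P(δ,c,2) = I2(−δμ/σ, δ) when r D1 − 1 > −μ/σ. -/

import Mathlib

/-- The constant `D₁ = (|μ|+|σ|)(1 + (|μ|+|σ|)|c|δ)`. -/
noncomputable def D1 (μ σ c δ : ℝ) : ℝ := (|μ| + |σ|) * (1 + (|μ| + |σ|) * |c| * δ)

/-- The constant `D₂ = (D₁² + (|μ|+|σ|)³|c|δ)(1 + |σc|δ)`. -/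
noncomputable def D2 (μ σ c δ : ℝ) : ℝ :=
  ((D1 μ σ c δ) ^ 2 + (|μ| + |σ|) ^ 3 * |c| * δ) * (1 + |σ * c| * δ)

/-- The profile `η̄` used to define `η_{(3)}`. -/
noncomputable def etabar (δ d1 d2 s : ℝ) : ℝ :=
  if s ≤ 0 then -δ
  else if s < d1 / d2 then -δ + δ * d2 / 2 * s ^ 2
  else -δ - δ * d1 ^ 2 / (2 * d2) + δ * d1 * s

/-- The shift `θ_shift` used to define `η_{(3)}`. -/
noncomputable def thetaShift (δ d1 d2 uh : ℝ) : ℝ :=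
  if uh ≤ -δ + δ * d1 ^ 2 / (2 * d2) then Real.sqrt (2 * (uh + δ) / (d2 * δ))
  else (uh + δ + δ * d1 ^ 2 / (2 * d2)) / (d1 * δ)

/-- The extremal forcing functions `η_{(k)}` for `k = 1, 2, 3`. -/
noncomputable def etaK (μ σ c δ uh : ℝ) : ℕ → ℝ → ℝ
  | 1, θ => if θ < 0 then -δ else uh
  | 2, θ => max (uh + D1 μ σ c δ * δ * θ) (-δ)
  | 3, θ => etabar δ (D1 μ σ c δ) (D2 μ σ c δ)
      (θ + thetaShift δ (D1 μ σ c δ) (D2 μ σ c δ) uh)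
  | _, _ => 0

/-- `I(û, δ, ĉ, k) = û e^{μ(a+ĉδ)} + σ ∫_{-(a+ĉδ)}^{0} e^{-μθ} η_{(k)}(θ) dθ`
(the constants `D₁, D₂` in `η_{(k)}` are computed from `|c|`, while `ĉ` only enters
the integration limits). -/
noncomputable def Ifun (μ σ c a δ chat uh : ℝ) (k : ℕ) : ℝ :=
  uh * Real.exp (μ * (a + chat * δ)) +
    σ * ∫ θ in (-(a + chat * δ))..(0 : ℝ), Real.exp (-μ * θ) * etaK μ σ c δ uh k θ

/-- `P(δ, c, k) = sup_{û ∈ [-δ, -μδ/σ]} I(û, δ, |c|, k)`. -/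
noncomputable def Pfun (μ σ c a δ : ℝ) (k : ℕ) : ℝ :=
  sSup ((fun uh => Ifun μ σ c a δ |c| uh k) '' Set.Icc (-δ) (-μ * δ / σ))

/-- `r = a + |c|δ`. -/
noncomputable def rr (a c δ : ℝ) : ℝ := a + |c| * δ

/-- The explicit one-piece integral `I₁(û, δ)` (for `μ ≠ 0`). -/
noncomputable def I1fun (μ σ c a δ uh : ℝ) : ℝ :=
  uh * (Real.exp (μ * rr a c δ) + σ / μ * (Real.exp (μ * rr a c δ) - 1)) +
    σ / μ * D1 μ σ c δ * δ *
      (1 / μ * (Real.exp (μ * rr a c δ) - 1) - rr a c δ * Real.exp (μ * rr a c δ))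

/-- The explicit two-piece integral `I₂(û, δ)` (for `μ ≠ 0`). -/
noncomputable def I2fun (μ σ c a δ uh : ℝ) : ℝ :=
  uh * (Real.exp (μ * rr a c δ) - σ / μ) +
    σ / μ * δ * (D1 μ σ c δ / μ *
      (Real.exp (μ * (δ + uh) / (D1 μ σ c δ * δ)) - 1) - Real.exp (μ * rr a c δ))


/-! For `û ∈ [-δ, -μδ/σ]` the map `û ↦ I(û, δ, |c|, 2)` is concave: raising `û` lifts
`η_{(2)}` by the same amount, but only to the right of its kink `θ = -(û + δ)/(D₁δ)`, so its
slope is `e^{μr} + (σ/μ)(e^{μs} - 1)` with `s = min((û + δ)/(D₁δ), r)`, decreasing in `û`.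
If this slope is negative at the right end `û = -μδ/σ`, a Taylor bound on `e^{μs}` shows
`μ < 0` and then `I(-δ) ≥ δ`, contradicting `P < δ`. So `I` is nondecreasing, the supremum is
attained at `û = -μδ/σ`, and there the integral is computed in closed form: `I₁` when the kink
lies left of `-r`, `I₂` when it cuts `[-r, 0]` in two. -/

open Real intervalIntegral Set

noncomputable def expAffineAntideriv (μ K L t : ℝ) : ℝ :=
  -((K + L * t) * exp (-μ * t) / μ) - L * exp (-μ * t) / μ ^ 2

lemma hasDerivAt_expAffineAntideriv {μ : ℝ} (hμ : μ ≠ 0) (K L t : ℝ) :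
    HasDerivAt (expAffineAntideriv μ K L) (exp (-μ * t) * (K + L * t)) t := by
  have he : HasDerivAt (fun t => exp (-μ * t)) (exp (-μ * t) * -μ) t := by
    simpa using ((hasDerivAt_id t).const_mul (-μ)).exp
  have hl : HasDerivAt (fun t => K + L * t) L t := by
    simpa using ((hasDerivAt_id t).const_mul L).const_add K
  refine (((hl.mul he).div_const μ).neg.sub ((he.const_mul L).div_const (μ ^ 2))).congr_deriv ?_
  field_simp
  ring

lemma integral_exp_mul_affine {μ : ℝ} (hμ : μ ≠ 0) (K L x y : ℝ) :
    ∫ θ in x..y, exp (-μ * θ) * (K + L * θ) =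
      expAffineAntideriv μ K L y - expAffineAntideriv μ K L x :=
  integral_eq_sub_of_hasDerivAt (fun θ _ => hasDerivAt_expAffineAntideriv hμ K L θ)
    (Continuous.intervalIntegrable (by fun_prop) x y)

lemma integral_exp_neg_mul_neg_zero {μ : ℝ} (hμ : μ ≠ 0) (s : ℝ) :
    ∫ θ in (-s)..0, exp (-μ * θ) = (exp (μ * s) - 1) / μ := by
  have h := integral_exp_mul_affine hμ 1 0 (-s) 0
  simp only [zero_mul, add_zero, mul_one] at h
  simp only [h, expAffineAntideriv, mul_zero, zero_mul, exp_zero, neg_mul_neg]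
  field_simp
  ring

/-- The derivative in `û` of `I(û, δ, |c|, 2)` when the kink of `η_{(2)}` sits at `θ = -s`. -/
noncomputable def rampSlope (μ σ r s : ℝ) : ℝ := exp (μ * r) + σ / μ * (exp (μ * s) - 1)

lemma rampSlope_nonneg {μ σ r s : ℝ} (hμ : 0 < μ) (hσ : σ ≤ 0) (hsr : s ≤ r)
    (hσs : -1 ≤ σ * s) : 0 ≤ rampSlope μ σ r s := by
  have hexp : exp (μ * s) - 1 ≤ μ * s * exp (μ * s) := by
    have h := add_one_le_exp (-(μ * s))
    have h' : exp (μ * s) * exp (-(μ * s)) = 1 := by rw [← exp_add]; simp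
    nlinarith [exp_pos (μ * s)]
  have h1 : σ * s * exp (μ * s) ≤ σ / μ * (exp (μ * s) - 1) := by
    rw [div_mul_eq_mul_div, le_div_iff₀ hμ]
    nlinarith
  have h2 : exp (μ * s) ≤ exp (μ * r) := exp_le_exp.2 (by nlinarith)
  unfold rampSlope
  nlinarith [exp_pos (μ * s)]

lemma rampSlope_lt_neg_one {μ σ r s : ℝ} (hμ : μ < 0) (hσμ : σ ≤ μ)
    (hσs : σ * s * (μ + σ) ≤ μ - σ) (hneg : rampSlope μ σ r s < 0) :
    rampSlope μ σ r r < -1 := by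
  have hmul : ∀ t, μ * rampSlope μ σ r t = μ * exp (μ * r) + σ * (exp (μ * t) - 1) := by
    intro t; unfold rampSlope; rw [mul_add, ← mul_assoc, mul_div_cancel₀ _ hμ.ne]
  have hexp := add_one_le_exp (μ * s)
  have h1 : 0 < μ * exp (μ * r) + σ * (μ * s) := by
    nlinarith [hmul s, mul_pos_of_neg_of_neg hμ hneg]
  have h2 : exp (μ * r) < -(σ * s) := by nlinarith
  have h3 : σ - μ < (μ + σ) * exp (μ * r) := by nlinarith
  nlinarith [hmul r]

section ramp

variable {μ σ c a δ : ℝ}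

lemma neg_le_neg_mul_div (hσμ : σ ≤ μ) (hσ : σ < 0) (hδ : 0 ≤ δ) : -δ ≤ -μ * δ / σ := by
  rw [le_div_iff_of_neg hσ]
  nlinarith

lemma abs_add_abs_le_D1 (hδ : 0 ≤ δ) : |μ| + |σ| ≤ D1 μ σ c δ := by
  have h : 0 ≤ (|μ| + |σ|) * |c| * δ := by positivity
  unfold D1
  nlinarith [abs_nonneg μ, abs_nonneg σ]

lemma D1_pos (hμ : μ ≠ 0) (hδ : 0 ≤ δ) : 0 < D1 μ σ c δ :=
  lt_of_lt_of_le (by positivity) (abs_add_abs_le_D1 hδ)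

lemma etaK_two (u θ : ℝ) :
    etaK μ σ c δ u 2 θ = max (u + D1 μ σ c δ * δ * θ) (-δ) := rfl

lemma continuous_exp_mul_etaK_two (u : ℝ) :
    Continuous fun θ => exp (-μ * θ) * etaK μ σ c δ u 2 θ := by
  simp only [etaK_two]
  fun_prop

lemma Ifun_two_eq (u : ℝ) : Ifun μ σ c a δ |c| u 2 = u * exp (μ * rr a c δ) +
    σ * ∫ θ in (-rr a c δ)..0, exp (-μ * θ) * etaK μ σ c δ u 2 θ := rfl

lemma Ifun_two_eq_I1fun (hμ : μ ≠ 0) (hδ : 0 ≤ δ) (hr : 0 ≤ rr a c δ) {u : ℝ}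
    (hkink : rr a c δ * (D1 μ σ c δ * δ) ≤ u + δ) :
    Ifun μ σ c a δ |c| u 2 = I1fun μ σ c a δ u := by
  have hK : 0 ≤ D1 μ σ c δ * δ := mul_nonneg (D1_pos hμ hδ).le hδ
  have hη : EqOn (fun θ => exp (-μ * θ) * etaK μ σ c δ u 2 θ)
      (fun θ => exp (-μ * θ) * (u + D1 μ σ c δ * δ * θ)) (uIcc (-rr a c δ) 0) := by
    intro θ hθ
    rw [uIcc_of_le (by linarith)] at hθ
    have : D1 μ σ c δ * δ * (-rr a c δ) ≤ D1 μ σ c δ * δ * θ :=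
      mul_le_mul_of_nonneg_left hθ.1 hK
    simp only [etaK_two, max_eq_left (by linarith : -δ ≤ u + D1 μ σ c δ * δ * θ)]
  rw [Ifun_two_eq, integral_congr hη, integral_exp_mul_affine hμ, I1fun]
  simp only [expAffineAntideriv, mul_zero, add_zero, exp_zero, neg_mul_neg]
  field_simp
  ring

lemma Ifun_two_eq_I2fun (hμ : μ ≠ 0) (hδ : 0 < δ) {u : ℝ} (hu : -δ ≤ u)
    (hkink : u + δ ≤ rr a c δ * (D1 μ σ c δ * δ)) :
    Ifun μ σ c a δ |c| u 2 = I2fun μ σ c a δ u := by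
  set K := D1 μ σ c δ * δ with hKdef
  have hK : 0 < K := mul_pos (D1_pos hμ hδ.le) hδ
  set T := -((u + δ) / K) with hTdef
  have hKT : K * T = -(u + δ) := by rw [hTdef]; field_simp
  have hT0 : T ≤ 0 := by rw [hTdef, neg_nonpos]; exact div_nonneg (by linarith) hK.le
  have hrT : -rr a c δ ≤ T := by rw [hTdef, neg_le_neg_iff, div_le_iff₀ hK]; linarith
  have hcont := continuous_exp_mul_etaK_two (μ := μ) (σ := σ) (c := c) (δ := δ) u
  have hflat : EqOn (fun θ => exp (-μ * θ) * etaK μ σ c δ u 2 θ)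
      (fun θ => exp (-μ * θ) * (-δ + 0 * θ)) (uIcc (-rr a c δ) T) := by
    intro θ hθ
    rw [uIcc_of_le hrT] at hθ
    have : K * θ ≤ K * T := mul_le_mul_of_nonneg_left hθ.2 hK.le
    simp only [etaK_two, ← hKdef, max_eq_right (by linarith : u + K * θ ≤ -δ), zero_mul, add_zero]
  have hramp : EqOn (fun θ => exp (-μ * θ) * etaK μ σ c δ u 2 θ)
      (fun θ => exp (-μ * θ) * (u + K * θ)) (uIcc T 0) := by
    intro θ hθ
    rw [uIcc_of_le hT0] at hθ
    have : K * T ≤ K * θ := mul_le_mul_of_nonneg_left hθ.1 hK.le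
    simp only [etaK_two, ← hKdef, max_eq_left (by linarith : -δ ≤ u + K * θ)]
  rw [Ifun_two_eq, ← integral_add_adjacent_intervals (b := T) (hcont.intervalIntegrable _ _)
    (hcont.intervalIntegrable _ _), integral_congr hflat, integral_congr hramp,
    integral_exp_mul_affine hμ, integral_exp_mul_affine hμ, I2fun]
  simp only [expAffineAntideriv, hKT, mul_zero, zero_mul, add_zero, exp_zero, neg_mul_neg]
  rw [show -μ * T = μ * (δ + u) / K by rw [hTdef]; ring, hKdef]
  field_simp
  ring

lemma Ifun_two_neg_delta (hμ : μ ≠ 0) (hδ : 0 < δ) (hr : 0 ≤ rr a c δ) :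
    Ifun μ σ c a δ |c| (-δ) 2 = -δ * rampSlope μ σ (rr a c δ) (rr a c δ) := by
  have hK : 0 ≤ rr a c δ * (D1 μ σ c δ * δ) := by
    have := D1_pos (σ := σ) (c := c) hμ hδ.le
    positivity
  rw [Ifun_two_eq_I2fun hμ hδ le_rfl (by linarith), I2fun, rampSlope, add_neg_cancel,
    mul_zero, zero_div, exp_zero]
  ring

lemma etaK_two_mono {u₁ u₂ : ℝ} (h12 : u₁ ≤ u₂) (θ : ℝ) :
    etaK μ σ c δ u₁ 2 θ ≤ etaK μ σ c δ u₂ 2 θ :=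
  max_le_max_right _ (by linarith)

lemma etaK_two_le_add {u₁ u₂ : ℝ} (h12 : u₁ ≤ u₂) (θ : ℝ) :
    etaK μ σ c δ u₂ 2 θ ≤ etaK μ σ c δ u₁ 2 θ + (u₂ - u₁) := by
  simp only [etaK_two]
  exact max_le (by linarith [le_max_left (u₁ + D1 μ σ c δ * δ * θ) (-δ)])
    (by linarith [le_max_right (u₁ + D1 μ σ c δ * δ * θ) (-δ)])

lemma Ifun_two_sub_le (hσ : σ ≤ 0) (hr : 0 ≤ rr a c δ) {u₁ u₂ : ℝ} (h12 : u₁ ≤ u₂) :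
    Ifun μ σ c a δ |c| u₂ 2 - Ifun μ σ c a δ |c| u₁ 2 ≤ (u₂ - u₁) * exp (μ * rr a c δ) := by
  have h : ∫ θ in (-rr a c δ)..0, exp (-μ * θ) * etaK μ σ c δ u₁ 2 θ ≤
      ∫ θ in (-rr a c δ)..0, exp (-μ * θ) * etaK μ σ c δ u₂ 2 θ :=
    integral_mono_on (by linarith) ((continuous_exp_mul_etaK_two _).intervalIntegrable _ _)
      ((continuous_exp_mul_etaK_two _).intervalIntegrable _ _)
      fun θ _ => mul_le_mul_of_nonneg_left (etaK_two_mono h12 θ) (exp_pos _).le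
  rw [Ifun_two_eq, Ifun_two_eq]
  linear_combination mul_le_mul_of_nonpos_left h hσ

lemma integral_etaK_two_sub_le (hμ : μ ≠ 0) (hK : 0 ≤ D1 μ σ c δ * δ) {r s u₁ u₂ : ℝ}
    (h12 : u₁ ≤ u₂) (hs0 : 0 ≤ s) (hsr : s ≤ r)
    (hs : s = r ∨ u₂ + δ ≤ D1 μ σ c δ * δ * s) :
    (∫ θ in (-r)..0, exp (-μ * θ) * etaK μ σ c δ u₂ 2 θ) -
        ∫ θ in (-r)..0, exp (-μ * θ) * etaK μ σ c δ u₁ 2 θ ≤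
      (u₂ - u₁) * ((exp (μ * s) - 1) / μ) := by
  have hint : ∀ x y, IntervalIntegrable (fun θ => exp (-μ * θ) * etaK μ σ c δ u₂ 2 θ -
      exp (-μ * θ) * etaK μ σ c δ u₁ 2 θ) MeasureTheory.volume x y := fun x y =>
    ((continuous_exp_mul_etaK_two _).sub (continuous_exp_mul_etaK_two _)).intervalIntegrable x y
  rw [← integral_sub ((continuous_exp_mul_etaK_two _).intervalIntegrable _ _)
    ((continuous_exp_mul_etaK_two _).intervalIntegrable _ _),
    ← integral_add_adjacent_intervals (hint (-r) (-s)) (hint (-s) 0)]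
  have hfar : ∫ θ in (-r)..(-s), exp (-μ * θ) * etaK μ σ c δ u₂ 2 θ -
      exp (-μ * θ) * etaK μ σ c δ u₁ 2 θ = 0 := by
    rcases hs with rfl | hs
    · exact integral_same
    refine (integral_congr fun θ hθ => ?_).trans integral_zero
    rw [uIcc_of_le (by linarith)] at hθ
    have : D1 μ σ c δ * δ * θ ≤ D1 μ σ c δ * δ * -s := mul_le_mul_of_nonneg_left hθ.2 hK
    simp only [etaK_two, max_eq_right (by linarith : u₁ + D1 μ σ c δ * δ * θ ≤ -δ),
      max_eq_right (by linarith : u₂ + D1 μ σ c δ * δ * θ ≤ -δ), sub_self]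
  have hnear : ∫ θ in (-s)..0, exp (-μ * θ) * etaK μ σ c δ u₂ 2 θ -
      exp (-μ * θ) * etaK μ σ c δ u₁ 2 θ ≤ ∫ θ in (-s)..0, (u₂ - u₁) * exp (-μ * θ) := by
    refine integral_mono_on (by linarith) (hint _ _)
      (Continuous.intervalIntegrable (by fun_prop) _ _) fun θ _ => ?_
    have h := etaK_two_le_add (μ := μ) (σ := σ) (c := c) (δ := δ) h12 θ
    rw [← mul_sub, mul_comm (u₂ - u₁)]
    exact mul_le_mul_of_nonneg_left (by linarith) (exp_pos _).le
  rw [hfar, zero_add]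
  rwa [integral_const_mul, integral_exp_neg_mul_neg_zero hμ] at hnear

lemma Ifun_two_sub_ge (hμ : μ ≠ 0) (hσ : σ ≤ 0) (hδ : 0 ≤ δ) {s u₁ u₂ : ℝ} (h12 : u₁ ≤ u₂)
    (hs0 : 0 ≤ s) (hsr : s ≤ rr a c δ) (hs : s = rr a c δ ∨ u₂ + δ ≤ D1 μ σ c δ * δ * s) :
    (u₂ - u₁) * rampSlope μ σ (rr a c δ) s ≤
      Ifun μ σ c a δ |c| u₂ 2 - Ifun μ σ c a δ |c| u₁ 2 := by
  have h := integral_etaK_two_sub_le hμ (mul_nonneg (D1_pos hμ hδ).le hδ) h12 hs0 hsr hs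
  rw [Ifun_two_eq, Ifun_two_eq, rampSlope]
  linear_combination mul_le_mul_of_nonpos_left h hσ

lemma Ifun_two_le_Pfun (hσ : σ ≤ 0) (hr : 0 ≤ rr a c δ) {u : ℝ}
    (hu : u ∈ Icc (-δ) (-μ * δ / σ)) : Ifun μ σ c a δ |c| u 2 ≤ Pfun μ σ c a δ 2 := by
  refine le_csSup ⟨Ifun μ σ c a δ |c| (-δ) 2 + (-μ * δ / σ + δ) * exp (μ * rr a c δ), ?_⟩
    (mem_image_of_mem _ hu)
  rintro _ ⟨v, hv, rfl⟩
  have h := Ifun_two_sub_le (μ := μ) (c := c) (a := a) hσ hr hv.1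
  nlinarith [mul_le_mul_of_nonneg_right hv.2 (exp_pos (μ * rr a c δ)).le]

lemma Pfun_two_eq_of_rampSlope_nonneg (hμ : μ ≠ 0) (hσ : σ ≤ 0) (hδ : 0 ≤ δ)
    (hu : -δ ≤ -μ * δ / σ) {s : ℝ} (hs0 : 0 ≤ s) (hsr : s ≤ rr a c δ)
    (hs : s = rr a c δ ∨ -μ * δ / σ + δ ≤ D1 μ σ c δ * δ * s)
    (hslope : 0 ≤ rampSlope μ σ (rr a c δ) s) :
    Pfun μ σ c a δ 2 = Ifun μ σ c a δ |c| (-μ * δ / σ) 2 := by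
  refine IsGreatest.csSup_eq ⟨mem_image_of_mem _ ⟨hu, le_rfl⟩, ?_⟩
  rintro _ ⟨v, hv, rfl⟩
  have h := Ifun_two_sub_ge (c := c) (a := a) hμ hσ hδ hv.2 hs0 hsr hs
  nlinarith [mul_nonneg (sub_nonneg.2 hv.2) hslope]

lemma rampSlope_nonneg_of_Pfun_two_lt (hσμ : σ ≤ μ) (hσ : σ < -μ) (hμ : μ ≠ 0) (hδ : 0 < δ)
    (hr : 0 ≤ rr a c δ) {s : ℝ} (hs0 : 0 ≤ s) (hsr : s ≤ rr a c δ)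
    (hsk : D1 μ σ c δ * δ * s ≤ -μ * δ / σ + δ) (hP : Pfun μ σ c a δ 2 < δ) :
    0 ≤ rampSlope μ σ (rr a c δ) s := by
  have hσ0 : σ < 0 := by linarith
  have hsD : -(σ * s) * D1 μ σ c δ ≤ μ - σ := by
    have h := mul_le_mul_of_nonneg_left hsk (neg_nonneg.2 hσ0.le)
    rw [show -σ * (D1 μ σ c δ * δ * s) = -(σ * s) * D1 μ σ c δ * δ by ring,
      show -σ * (-μ * δ / σ + δ) = (μ - σ) * δ by field_simp [hσ0.ne]; ring] at h
    exact le_of_mul_le_mul_right h hδ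
  have hD := abs_add_abs_le_D1 (μ := μ) (σ := σ) (c := c) hδ.le
  rw [abs_of_neg hσ0] at hD
  have hσs : 0 ≤ -(σ * s) := by nlinarith
  refine le_of_not_gt fun hneg => ?_
  rcases hμ.lt_or_gt with hμ0 | hμ0
  · rw [abs_of_neg hμ0] at hD
    have hR := rampSlope_lt_neg_one hμ0 hσμ (by nlinarith) hneg
    have hu : -δ ∈ Icc (-δ) (-μ * δ / σ) := ⟨le_rfl, neg_le_neg_mul_div hσμ hσ0 hδ.le⟩
    have hI : δ ≤ Ifun μ σ c a δ |c| (-δ) 2 := by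
      rw [Ifun_two_neg_delta hμ hδ hr]
      nlinarith
    exact hP.not_ge (hI.trans (Ifun_two_le_Pfun hσ0.le hr hu))
  · rw [abs_of_pos hμ0] at hD
    exact hneg.not_ge (rampSlope_nonneg hμ0 hσ0.le hsr (by nlinarith))

lemma Pfun_two_eq_Ifun (hσμ : σ ≤ μ) (hσ : σ < -μ) (hμ : μ ≠ 0) (hδ : 0 < δ)
    (hr : 0 ≤ rr a c δ) (hP : Pfun μ σ c a δ 2 < δ) {s : ℝ} (hs0 : 0 ≤ s) (hsr : s ≤ rr a c δ)
    (hs : s = rr a c δ ∨ -μ * δ / σ + δ ≤ D1 μ σ c δ * δ * s)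
    (hsk : D1 μ σ c δ * δ * s ≤ -μ * δ / σ + δ) :
    Pfun μ σ c a δ 2 = Ifun μ σ c a δ |c| (-μ * δ / σ) 2 := by
  have hσ0 : σ < 0 := by linarith
  exact Pfun_two_eq_of_rampSlope_nonneg hμ hσ0.le hδ.le (neg_le_neg_mul_div hσμ hσ0 hδ.le)
    hs0 hsr hs (rampSlope_nonneg_of_Pfun_two_lt hσμ hσ hμ hδ hr hs0 hsr hsk hP)

lemma Pfun_two_eq_I1fun (hσμ : σ ≤ μ) (hσ : σ < -μ) (hμ : μ ≠ 0) (hδ : 0 < δ)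
    (hr : 0 ≤ rr a c δ) (hP : Pfun μ σ c a δ 2 < δ)
    (hcase : rr a c δ * D1 μ σ c δ ≤ -μ / σ + 1) :
    Pfun μ σ c a δ 2 = I1fun μ σ c a δ (-μ * δ / σ) := by
  have hkink : rr a c δ * (D1 μ σ c δ * δ) ≤ -μ * δ / σ + δ := by
    rw [← mul_assoc, show -μ * δ / σ + δ = (-μ / σ + 1) * δ by ring]
    exact mul_le_mul_of_nonneg_right hcase hδ.le
  rw [Pfun_two_eq_Ifun hσμ hσ hμ hδ hr hP hr le_rfl (Or.inl rfl) (by linarith),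
    Ifun_two_eq_I1fun hμ hδ.le hr hkink]

lemma Pfun_two_eq_I2fun (hσμ : σ ≤ μ) (hσ : σ < -μ) (hμ : μ ≠ 0) (hδ : 0 < δ)
    (hr : 0 ≤ rr a c δ) (hP : Pfun μ σ c a δ 2 < δ)
    (hcase : -μ / σ + 1 ≤ rr a c δ * D1 μ σ c δ) :
    Pfun μ σ c a δ 2 = I2fun μ σ c a δ (-μ * δ / σ) := by
  have hσ0 : σ < 0 := by linarith
  have hK : 0 < D1 μ σ c δ * δ := mul_pos (D1_pos hμ hδ.le) hδ
  have hkink : -μ * δ / σ + δ ≤ rr a c δ * (D1 μ σ c δ * δ) := by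
    rw [← mul_assoc, show -μ * δ / σ + δ = (-μ / σ + 1) * δ by ring]
    exact mul_le_mul_of_nonneg_right hcase hδ.le
  have hs : D1 μ σ c δ * δ * ((-μ * δ / σ + δ) / (D1 μ σ c δ * δ)) = -μ * δ / σ + δ :=
    mul_div_cancel₀ _ hK.ne'
  rw [Pfun_two_eq_Ifun hσμ hσ hμ hδ hr hP
    (div_nonneg (by linarith [neg_le_neg_mul_div hσμ hσ0 hδ.le]) hK.le)
    ((div_le_iff₀ hK).2 hkink) (Or.inr hs.ge) hs.le,
    Ifun_two_eq_I2fun hμ hδ (neg_le_neg_mul_div hσμ hσ0 hδ.le) hkink]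

end ramp

theorem stmt_9_general (μ σ c a δ : ℝ) (ha : 0 < a)
    (h1 : σ ≤ μ) (h2 : σ < -μ) (hμ : μ ≠ 0)
    (hδ0 : 0 < δ)
    (hP : Pfun μ σ c a δ 2 < δ) :
    (rr a c δ * D1 μ σ c δ - 1 ≤ -μ / σ →
      Pfun μ σ c a δ 2 = I1fun μ σ c a δ (-δ * μ / σ)) ∧
    (-μ / σ < rr a c δ * D1 μ σ c δ - 1 →
      Pfun μ σ c a δ 2 = I2fun μ σ c a δ (-δ * μ / σ)) := by
  have hr : 0 ≤ rr a c δ := by unfold rr; positivity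
  rw [show -δ * μ / σ = -μ * δ / σ by ring]
  exact ⟨fun hcase => Pfun_two_eq_I1fun h1 h2 hμ hδ0 hr hP (by linarith),
    fun hcase => Pfun_two_eq_I2fun h1 h2 hμ hδ0 hr hP (by linarith)⟩

/-- Theorem 4.2 of Humphries–Magpantay: explicit expression for
`P(δ, c, 2)` inside the region where `P(δ,c,2) < δ`. -/
theorem stmt_9 (μ σ c a δ : ℝ) (ha : 0 < a) (hc : c ≠ 0)
    (h1 : σ ≤ μ) (h2 : σ < -μ) (hμ : μ ≠ 0)
    (hδ0 : 0 < δ) (hδ1 : δ < |a / c|)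
    (hP : Pfun μ σ c a δ 2 < δ) :
    (rr a c δ * D1 μ σ c δ - 1 ≤ -μ / σ →
      Pfun μ σ c a δ 2 = I1fun μ σ c a δ (-δ * μ / σ)) ∧
    (-μ / σ < rr a c δ * D1 μ σ c δ - 1 →
      Pfun μ σ c a δ 2 = I2fun μ σ c a δ (-δ * μ / σ)) :=
  stmt_9_general μ σ c a δ ha h1 h2 hμ hδ0 hP
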